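/- Let λ/μ be a skew shape with n boxes. For every T ∈ SYT(λ/μ), A_{T,T} = ∏_{(i,j) ∈ inv(T)} (1 + a_{i,j}(T)) > 0 (for each inversion (i,j) of T one has ct(T(j)) − ct(T(i)) ≥ 2, so each factor lies in the interval (1, 3/2]), and A_{S,T} = 0 unless S ≤ T in Bruhat order. Consequently, the set {n_T : T ∈ SYT(λ/μ)} is a ℂ-basis of the seminormal module. -/

import Mathlib

open scoped Classical

noncomputable section

/-- A skew shape `λ/μ`: a pair of Young diagrams with `μ ⊆ λ`. -/
structure SkewShape where
  lam : YoungDiagram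
  mu : YoungDiagram
  sub : mu ≤ lam

namespace SkewShape

/-- The boxes of the skew shape: boxes of `λ` not in `μ`. -/
def cells (sh : SkewShape) : Finset (ℕ × ℕ) := sh.lam.cells \ sh.mu.cells

/-- The number `n` of boxes of the skew shape. -/
def nb (sh : SkewShape) : ℕ := sh.cells.card

/-- `f` is a filling of the skew shape with `1, …, n`, each appearing exactly once
(normalized to be `0` off the shape). -/
def IsFilling (sh : SkewShape) (f : ℕ × ℕ → ℕ) : Prop :=
  Set.BijOn f (↑sh.cells) (↑(Finset.Icc 1 sh.nb)) ∧ ∀ b, b ∉ sh.cells → f b = 0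

/-- Entries increase from left to right along rows and from top to bottom down columns. -/
def IsRowColStrict (sh : SkewShape) (f : ℕ × ℕ → ℕ) : Prop :=
  (∀ x y : ℕ, (x, y) ∈ sh.cells → (x, y + 1) ∈ sh.cells → f (x, y) < f (x, y + 1)) ∧
  (∀ x y : ℕ, (x, y) ∈ sh.cells → (x + 1, y) ∈ sh.cells → f (x, y) < f (x + 1, y))

/-- The set of standard Young tableaux of shape `λ/μ`. -/
def SYT (sh : SkewShape) : Set ((ℕ × ℕ) → ℕ) := {f | sh.IsFilling f ∧ sh.IsRowColStrict f}

/-- Standard Young tableaux of shape `λ/μ`, as a type. -/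
def SYTt (sh : SkewShape) : Type := {f : (ℕ × ℕ) → ℕ // f ∈ sh.SYT}

/-- The box of the tableau `f` containing the entry `i`. -/
def boxOf (sh : SkewShape) (f : (ℕ × ℕ) → ℕ) (i : ℕ) : ℕ × ℕ :=
  Function.invFunOn f (↑sh.cells) i

end SkewShape

/-- The content `ct(b) = y - x` of a box `b = (x, y)` (row `x`, column `y`). -/
def ctZ (b : ℕ × ℕ) : ℤ := (b.2 : ℤ) - (b.1 : ℤ)

/-- Exchange the entries `i` and `i+1` in a filling. -/
def sApply (i : ℕ) (f : (ℕ × ℕ) → ℕ) : (ℕ × ℕ) → ℕ := fun b => Equiv.swap i (i + 1) (f b)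

/-- Column-reading order on boxes: by column (left to right), then by row (top to bottom). -/
def colLt (b b' : ℕ × ℕ) : Prop := b.2 < b'.2 ∨ (b.2 = b'.2 ∧ b.1 < b'.1)

namespace SkewShape

/-- The column reading tableau `C` of the skew shape: enter `1, …, n` consecutively down
the columns, filling the columns from left to right. -/
def colReading (sh : SkewShape) : (ℕ × ℕ) → ℕ :=
  fun b => if b ∈ sh.cells then 1 + (sh.cells.filter fun b' => colLt b' b).card else 0

/-- The coefficient `a_{i,j}(T) = 1 / (ct(T(j)) - ct(T(i)))`. -/
def aIJ (sh : SkewShape) (f : (ℕ × ℕ) → ℕ) (i j : ℕ) : ℂ :=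
  1 / ((ctZ (sh.boxOf f j) : ℂ) - (ctZ (sh.boxOf f i) : ℂ))

/-- The coefficient `a_i(T) = a_{i,i+1}(T)`. -/
def aI (sh : SkewShape) (f : (ℕ × ℕ) → ℕ) (i : ℕ) : ℂ := sh.aIJ f i (i + 1)

/-- The seminormal basis vector `v_f` (or `0` if `f` is not standard). -/
def vOf (sh : SkewShape) (f : (ℕ × ℕ) → ℕ) : sh.SYTt →₀ ℂ :=
  if h : f ∈ sh.SYT then Finsupp.single ⟨f, h⟩ 1 else 0

/-- The seminormal operator of the simple transposition `s_i`:
`σ_i v_T = a_i(T) v_T + (1 + a_i(T)) v_{s_i(T)}`. -/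
def semiOp (sh : SkewShape) (i : ℕ) : (sh.SYTt →₀ ℂ) →ₗ[ℂ] (sh.SYTt →₀ ℂ) :=
  Finsupp.lsum ℂ fun T : sh.SYTt =>
    LinearMap.toSpanSingleton ℂ _
      (sh.aI T.1 i • sh.vOf T.1 + (1 + sh.aI T.1 i) • sh.vOf (sApply i T.1))

/-- `opWord sh [i_1, …, i_k] = σ_{i_1} ∘ σ_{i_2} ∘ ⋯ ∘ σ_{i_k}`. -/
def opWord (sh : SkewShape) : List ℕ → ((sh.SYTt →₀ ℂ) →ₗ[ℂ] (sh.SYTt →₀ ℂ))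
  | [] => LinearMap.id
  | i :: is => semiOp sh i ∘ₗ opWord sh is

end SkewShape

/-- The permutation `s_{i_1} s_{i_2} ⋯ s_{i_k}` determined by a list of indices. -/
def wordProd (l : List ℕ) : Equiv.Perm ℕ := (l.map fun i => Equiv.swap i (i + 1)).prod

/-- The letters of the word index simple transpositions `s_1, …, s_{n-1}` of `S_n`. -/
def IsSnWord (n : ℕ) (l : List ℕ) : Prop := ∀ i ∈ l, 1 ≤ i ∧ i + 1 ≤ n

/-- `l` is a reduced word for `w` in `S_n`. -/
def IsReducedWord (n : ℕ) (w : Equiv.Perm ℕ) (l : List ℕ) : Prop :=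
  IsSnWord n l ∧ wordProd l = w ∧
    ∀ l' : List ℕ, IsSnWord n l' → wordProd l' = w → l.length ≤ l'.length

/-- The Coxeter length of `w` in `S_n`: the minimal number of simple transpositions
in a word for `w`. -/
def permLength (n : ℕ) (w : Equiv.Perm ℕ) : ℕ :=
  sInf {k | ∃ l : List ℕ, IsSnWord n l ∧ l.length = k ∧ wordProd l = w}

/-- Bruhat order on `S_n`: `σ ≤ τ` iff some reduced word for `τ` contains a subword
that is a reduced word for `σ`. -/
def BruhatLE (n : ℕ) (σ τ : Equiv.Perm ℕ) : Prop :=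
  ∃ lτ : List ℕ, IsReducedWord n τ lτ ∧ ∃ lσ : List ℕ, lσ.Sublist lτ ∧ IsReducedWord n σ lσ

namespace SkewShape

/-- `w` is the word `w_f` of the tableau `f`: `w(C) = f`, with `w` fixing everything
outside `{1, …, n}`. -/
def IsWordOf (sh : SkewShape) (f : (ℕ × ℕ) → ℕ) (w : Equiv.Perm ℕ) : Prop :=
  (∀ b ∈ sh.cells, w (sh.colReading b) = f b) ∧ ∀ m, m ∉ Finset.Icc 1 sh.nb → w m = m

/-- Bruhat order on standard tableaux: `S ≤ T` iff `w_S ≤ w_T` in Bruhat order on `S_n`. -/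
def tabLE (sh : SkewShape) (f g : (ℕ × ℕ) → ℕ) : Prop :=
  ∃ wf wg : Equiv.Perm ℕ, sh.IsWordOf f wf ∧ sh.IsWordOf g wg ∧ BruhatLE sh.nb wf wg

end SkewShape

/-- Apply the letters of a list, left to right, to a filling. -/
def applyWord : List ℕ → ((ℕ × ℕ) → ℕ) → ((ℕ × ℕ) → ℕ)
  | [], f => f
  | i :: is, f => applyWord is (sApply i f)

namespace SkewShape

/-- `(f, [i_1, …, i_k])` is a path `f →^{s_{i_1}} ⋯ →^{s_{i_k}}` in the weak Bruhat graph: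
every tableau along the way is standard. -/
def IsPath (sh : SkewShape) : ((ℕ × ℕ) → ℕ) → List ℕ → Prop
  | f, [] => f ∈ sh.SYT
  | f, i :: is => f ∈ sh.SYT ∧ sh.IsPath (sApply i f) is

/-- `(f, [i_1, …, i_k], [z_1, …, z_k])` is a subpath of the path starting at `f` with letters
`[i_1, …, i_k]`; at step `j` one moves by `s_{i_j}` if `z_j = true` and waits otherwise.
All intermediate tableaux must be standard. -/
def IsSubpath (sh : SkewShape) : ((ℕ × ℕ) → ℕ) → List ℕ → List Bool → Prop
  | f, [], [] => f ∈ sh.SYT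
  | f, i :: is, z :: zs => f ∈ sh.SYT ∧ sh.IsSubpath (if z then sApply i f else f) is zs
  | _, _, _ => False

end SkewShape

/-- The tableau at which a subpath terminates. -/
def subEnd : ((ℕ × ℕ) → ℕ) → List ℕ → List Bool → ((ℕ × ℕ) → ℕ)
  | f, [], _ => f
  | f, _ :: _, [] => f
  | f, i :: is, z :: zs => subEnd (if z then sApply i f else f) is zs

namespace SkewShape

/-- The `π`-weight of a subpath: the product of `a_{i_j}(S_{j-1})` over waiting steps and
`1 + a_{i_j}(S_{j-1})` over moving steps. -/
def subWeight (sh : SkewShape) : ((ℕ × ℕ) → ℕ) → List ℕ → List Bool → ℂ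
  | _, [], _ => 1
  | _, _ :: _, [] => 1
  | f, i :: is, z :: zs =>
      (if z then 1 + sh.aI f i else sh.aI f i) * sh.subWeight (if z then sApply i f else f) is zs

/-- The transition coefficient computed from a path: the sum of `π`-weights of all subpaths
of the path `(f₀, is)` terminating at `g`. -/
def pathCoeff (sh : SkewShape) (f₀ : (ℕ × ℕ) → ℕ) (is : List ℕ) (g : (ℕ × ℕ) → ℕ) : ℂ :=
  ∑ zs : Fin is.length → Bool,
    if sh.IsSubpath f₀ is (List.ofFn zs) ∧ subEnd f₀ is (List.ofFn zs) = g then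
      sh.subWeight f₀ is (List.ofFn zs)
    else 0

/-- The coefficient of `v_g` in `(σ_{i_1} ∘ ⋯ ∘ σ_{i_k})(v_C)` (or `0` if `g` is not
standard). -/
def natCoeff (sh : SkewShape) (l : List ℕ) (g : (ℕ × ℕ) → ℕ) : ℂ :=
  if h : g ∈ sh.SYT then (sh.opWord l (sh.vOf sh.colReading)) ⟨g, h⟩ else 0

end SkewShape

end

namespace SkewShape

/-- The set of inversions of a tableau: pairs `(i, j)` with `i > j` such that `i` lies
strictly south and strictly west of `j`. -/
noncomputable def invSet (sh : SkewShape) (f : (ℕ × ℕ) → ℕ) : Finset (ℕ × ℕ) :=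
  (Finset.Icc 1 sh.nb ×ˢ Finset.Icc 1 sh.nb).filter fun p =>
    p.2 < p.1 ∧ (sh.boxOf f p.2).1 < (sh.boxOf f p.1).1 ∧ (sh.boxOf f p.1).2 < (sh.boxOf f p.2).2

end SkewShape

namespace PermAux

@[simp] lemma wordProd_nil : wordProd [] = 1 := rfl

lemma wordProd_cons (i : ℕ) (l : List ℕ) :
    wordProd (i :: l) = Equiv.swap i (i + 1) * wordProd l := by
  simp [wordProd]

lemma wordProd_append (l₁ l₂ : List ℕ) :
    wordProd (l₁ ++ l₂) = wordProd l₁ * wordProd l₂ := by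
  simp [wordProd]

/-- adjacent swap flips order only on the pair itself -/
lemma flip_lemma {j a b : ℕ} (hab : a < b) :
    (a = j ∧ b = j + 1) ∨ Equiv.swap j (j + 1) a < Equiv.swap j (j + 1) b := by
  rcases eq_or_ne a j with rfl | haj
  · rcases eq_or_ne b (a + 1) with rfl | hb1
    · left; exact ⟨rfl, rfl⟩
    · right
      rw [Equiv.swap_apply_left, Equiv.swap_apply_of_ne_of_ne (by omega) hb1]
      omega
  · rcases eq_or_ne a (j + 1) with rfl | haj1
    · right
      rw [Equiv.swap_apply_right, Equiv.swap_apply_of_ne_of_ne (by omega) (by omega)]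
      omega
    · right
      rw [Equiv.swap_apply_of_ne_of_ne haj haj1]
      rcases eq_or_ne b j with rfl | hbj
      · rw [Equiv.swap_apply_left]; omega
      · rcases eq_or_ne b (j + 1) with rfl | hbj1
        · rw [Equiv.swap_apply_right]; omega
        · rw [Equiv.swap_apply_of_ne_of_ne hbj hbj1]; exact hab

/-- permutation supported in `[1, n]` -/
def SuppIn (n : ℕ) (w : Equiv.Perm ℕ) : Prop := ∀ m, m ∉ Finset.Icc 1 n → w m = m

lemma suppIn_one (n : ℕ) : SuppIn n 1 := fun _ _ => rfl

lemma suppIn_swap {n i : ℕ} (h1 : 1 ≤ i) (h2 : i + 1 ≤ n) :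
    SuppIn n (Equiv.swap i (i + 1)) := by
  intro m hm
  simp only [Finset.mem_Icc, not_and_or, not_le] at hm
  exact Equiv.swap_apply_of_ne_of_ne (by omega) (by omega)

lemma suppIn_mul {n : ℕ} {u v : Equiv.Perm ℕ} (hu : SuppIn n u) (hv : SuppIn n v) :
    SuppIn n (u * v) := by
  intro m hm
  simp only [Equiv.Perm.mul_apply]
  rw [hv m hm, hu m hm]

lemma suppIn_inv {n : ℕ} {u : Equiv.Perm ℕ} (hu : SuppIn n u) : SuppIn n u⁻¹ := by
  intro m hm
  have h1 : u m = m := hu m hm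
  calc u⁻¹ m = u⁻¹ (u m) := by rw [h1]
  _ = m := u.symm_apply_apply m

lemma suppIn_wordProd {n : ℕ} {l : List ℕ} (h : IsSnWord n l) : SuppIn n (wordProd l) := by
  induction l with
  | nil => exact suppIn_one n
  | cons i l ih =>
      rw [wordProd_cons]
      exact suppIn_mul (suppIn_swap (h i (by simp)).1 (h i (by simp)).2)
        (ih fun j hj => h j (by simp [hj]))

lemma suppIn_mapsTo {n : ℕ} {w : Equiv.Perm ℕ} (hw : SuppIn n w) {m : ℕ}
    (hm : m ∈ Finset.Icc 1 n) : w m ∈ Finset.Icc 1 n := by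
  by_contra h
  have h2 := hw _ h
  have : w m = m := w.injective h2
  rw [this] at h
  exact h hm


/-- Inversion set of a permutation, within `[1,n]`. -/
def Inv (n : ℕ) (w : Equiv.Perm ℕ) : Finset (ℕ × ℕ) :=
  (Finset.Icc 1 n ×ˢ Finset.Icc 1 n).filter fun p => p.1 < p.2 ∧ w p.2 < w p.1

lemma mem_Inv {n : ℕ} {w : Equiv.Perm ℕ} {p : ℕ × ℕ} :
    p ∈ Inv n w ↔ p.1 ∈ Finset.Icc 1 n ∧ p.2 ∈ Finset.Icc 1 n ∧ p.1 < p.2 ∧ w p.2 < w p.1 := by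
  simp [Inv, and_assoc]

@[simp] lemma Inv_one (n : ℕ) : Inv n 1 = ∅ := by
  ext p; simp [mem_Inv]; omega

/-- up toggle: left-multiplying by `s_j` when `w⁻¹ j < w⁻¹ (j+1)` inserts an inversion. -/
lemma Inv_up {n j : ℕ} {w : Equiv.Perm ℕ} (h1 : 1 ≤ j) (h2 : j + 1 ≤ n)
    (hw : SuppIn n w) (hup : w⁻¹ j < w⁻¹ (j + 1)) :
    (w⁻¹ j, w⁻¹ (j + 1)) ∉ Inv n w ∧
      Inv n (Equiv.swap j (j + 1) * w) = insert (w⁻¹ j, w⁻¹ (j + 1)) (Inv n w) := by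
  have hwinv := suppIn_inv hw
  have hjm : j ∈ Finset.Icc 1 n := by simp; omega
  have hj1m : (j + 1) ∈ Finset.Icc 1 n := by simp; omega
  constructor
  · rw [mem_Inv]
    rintro ⟨-, -, -, hlt⟩
    simp only [Equiv.Perm.coe_inv, Equiv.apply_symm_apply] at hlt
    omega
  · ext p
    obtain ⟨a, b⟩ := p
    simp only [mem_Inv, Finset.mem_insert, Prod.mk.injEq, Equiv.Perm.mul_apply]
    constructor
    · rintro ⟨ha, hb, hab, hlt⟩
      by_cases hin : w b < w a
      · exact Or.inr ⟨ha, hb, hab, hin⟩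
      · have hne : w a ≠ w b := fun h => by have := w.injective h; omega
        have hwab : w a < w b := by omega
        rcases flip_lemma (j := j) hwab with ⟨hx, hy⟩ | h
        · left
          constructor
          · rw [← hx, Equiv.Perm.inv_def, Equiv.symm_apply_apply]
          · rw [← hy, Equiv.Perm.inv_def, Equiv.symm_apply_apply]
        · omega
    · rintro (⟨rfl, rfl⟩ | ⟨ha, hb, hab, hlt⟩)
      · refine ⟨suppIn_mapsTo hwinv hjm, suppIn_mapsTo hwinv hj1m, hup, ?_⟩
        simp only [Equiv.Perm.coe_inv, Equiv.apply_symm_apply, Equiv.swap_apply_left, Equiv.swap_apply_right]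
        omega
      · refine ⟨ha, hb, hab, ?_⟩
        rcases flip_lemma (j := j) hlt with ⟨hx, hy⟩ | h
        · exfalso
          have hb' : b = w⁻¹ j := by rw [← hx, Equiv.Perm.inv_def, Equiv.symm_apply_apply]
          have ha' : a = w⁻¹ (j + 1) := by rw [← hy, Equiv.Perm.inv_def, Equiv.symm_apply_apply]
          omega
        · exact h

/-- down toggle, as a corollary. -/
lemma Inv_down {n j : ℕ} {w : Equiv.Perm ℕ} (h1 : 1 ≤ j) (h2 : j + 1 ≤ n)
    (hw : SuppIn n w) (hdn : w⁻¹ (j + 1) < w⁻¹ j) :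
    (w⁻¹ (j + 1), w⁻¹ j) ∉ Inv n (Equiv.swap j (j + 1) * w) ∧
      Inv n w = insert (w⁻¹ (j + 1), w⁻¹ j) (Inv n (Equiv.swap j (j + 1) * w)) := by
  set w2 := Equiv.swap j (j + 1) * w with hw2
  have hw2s : SuppIn n w2 := suppIn_mul (suppIn_swap h1 h2) hw
  have e1 : w2⁻¹ j = w⁻¹ (j + 1) := by
    rw [hw2, mul_inv_rev, Equiv.Perm.mul_apply, Equiv.swap_inv, Equiv.swap_apply_left]
  have e2 : w2⁻¹ (j + 1) = w⁻¹ j := by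
    rw [hw2, mul_inv_rev, Equiv.Perm.mul_apply, Equiv.swap_inv, Equiv.swap_apply_right]
  have hup : w2⁻¹ j < w2⁻¹ (j + 1) := by rw [e1, e2]; exact hdn
  have h := Inv_up h1 h2 hw2s hup
  have hww : Equiv.swap j (j + 1) * w2 = w := by
    rw [hw2, ← mul_assoc, Equiv.swap_mul_self, one_mul]
  rw [hww, e1, e2] at h
  exact h

lemma card_Inv_up {n j : ℕ} {w : Equiv.Perm ℕ} (h1 : 1 ≤ j) (h2 : j + 1 ≤ n)
    (hw : SuppIn n w) (hup : w⁻¹ j < w⁻¹ (j + 1)) :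
    (Inv n (Equiv.swap j (j + 1) * w)).card = (Inv n w).card + 1 := by
  obtain ⟨hnot, heq⟩ := Inv_up h1 h2 hw hup
  rw [heq, Finset.card_insert_of_notMem hnot]

lemma card_Inv_down {n j : ℕ} {w : Equiv.Perm ℕ} (h1 : 1 ≤ j) (h2 : j + 1 ≤ n)
    (hw : SuppIn n w) (hdn : w⁻¹ (j + 1) < w⁻¹ j) :
    (Inv n w).card = (Inv n (Equiv.swap j (j + 1) * w)).card + 1 := by
  obtain ⟨hnot, heq⟩ := Inv_down h1 h2 hw hdn
  rw [heq, Finset.card_insert_of_notMem hnot]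

lemma card_Inv_le_length {n : ℕ} {l : List ℕ} (h : IsSnWord n l) :
    (Inv n (wordProd l)).card ≤ l.length := by
  induction l with
  | nil => simp
  | cons i l ih =>
      have hi := h i (by simp)
      have hl : IsSnWord n l := fun j hj => h j (by simp [hj])
      have hwl := suppIn_wordProd hl
      rw [wordProd_cons]
      set w := wordProd l
      have hne : w⁻¹ i ≠ w⁻¹ (i + 1) := fun hh => by
        have := w⁻¹.injective hh; omega
      rcases lt_or_gt_of_ne hne with hup | hdn
      · rw [card_Inv_up hi.1 hi.2 hwl hup]
        simpa using Nat.add_le_add_right (ih hl) 1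
      · have h2 := card_Inv_down hi.1 hi.2 hwl hdn
        have hih := ih hl
        simp only [List.length_cons]
        omega


lemma snWord_sublist {n : ℕ} {m m' : List ℕ} (hs : m'.Sublist m) (h : IsSnWord n m) :
    IsSnWord n m' := fun j hj => h j (hs.subset hj)

/-- strong exchange for adjacent-transposition words in `S_∞`. -/
lemma exchange : ∀ (m : List ℕ) (a b : ℕ), a < b →
    (wordProd m)⁻¹ b < (wordProd m)⁻¹ a →
    ∃ m₁ j m₂, m = m₁ ++ j :: m₂ ∧
      Equiv.swap a b * wordProd m = wordProd (m₁ ++ m₂) := by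
  intro m
  induction m with
  | nil => intro a b hab h; simp at h; omega
  | cons j m' ih =>
      intro a b hab h
      by_cases hcase : a = j ∧ b = j + 1
      · obtain ⟨rfl, rfl⟩ := hcase
        refine ⟨[], a, m', by simp, ?_⟩
        rw [wordProd_cons, ← mul_assoc, Equiv.swap_mul_self, one_mul]
        simp
      · have hflip : Equiv.swap j (j + 1) a < Equiv.swap j (j + 1) b := by
          rcases flip_lemma (j := j) hab with hc | hc
          · exact absurd hc hcase
          · exact hc
        have hyp' : (wordProd m')⁻¹ (Equiv.swap j (j + 1) b) <
            (wordProd m')⁻¹ (Equiv.swap j (j + 1) a) := by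
          have e : ∀ x, (wordProd (j :: m'))⁻¹ x = (wordProd m')⁻¹ (Equiv.swap j (j + 1) x) := by
            intro x
            rw [wordProd_cons, mul_inv_rev, Equiv.Perm.mul_apply, Equiv.swap_inv]
          rw [← e, ← e]
          exact h
        obtain ⟨m₁, jj, m₂, heq, hprod⟩ := ih _ _ hflip hyp'
        refine ⟨j :: m₁, jj, m₂, by simp [heq], ?_⟩
        have conj : Equiv.swap (Equiv.swap j (j + 1) a) (Equiv.swap j (j + 1) b) =
            Equiv.swap j (j + 1) * Equiv.swap a b * (Equiv.swap j (j + 1))⁻¹ :=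
          Equiv.swap_apply_apply _ a b
        rw [wordProd_cons, ← mul_assoc]
        have key : Equiv.swap a b * Equiv.swap j (j + 1) =
            Equiv.swap j (j + 1) * Equiv.swap (Equiv.swap j (j + 1) a) (Equiv.swap j (j + 1) b) := by
          rw [conj, Equiv.swap_inv, ← mul_assoc, ← mul_assoc, Equiv.swap_mul_self, one_mul]
        rw [key, mul_assoc, hprod, ← wordProd_cons]
        rfl

/-- find a length-decreasing step when a word is not reduced. -/
lemma scan {n : ℕ} : ∀ (m : List ℕ), IsSnWord n m →
    (Inv n (wordProd m)).card < m.length →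
    ∃ m₁ j m₂, m = m₁ ++ j :: m₂ ∧
      (wordProd m₂)⁻¹ (j + 1) < (wordProd m₂)⁻¹ j := by
  intro m
  induction m with
  | nil => intro _ h; simp at h
  | cons j m' ih =>
      intro hsn hlt
      have hj := hsn j (by simp)
      have hsn' : IsSnWord n m' := fun i hi => hsn i (by simp [hi])
      have hwl := suppIn_wordProd hsn'
      set w := wordProd m' with hw
      have hne : w⁻¹ j ≠ w⁻¹ (j + 1) := fun hh => by have := w⁻¹.injective hh; omega
      by_cases hdn : w⁻¹ (j + 1) < w⁻¹ j
      · exact ⟨[], j, m', by simp, hdn⟩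
      · have hup : w⁻¹ j < w⁻¹ (j + 1) := by omega
        have hcard := card_Inv_up hj.1 hj.2 hwl hup
        rw [wordProd_cons, ← hw] at hlt
        rw [hcard] at hlt
        simp only [List.length_cons] at hlt
        obtain ⟨m₁, jj, m₂, heq, hlt2⟩ := ih hsn' (by omega)
        exact ⟨j :: m₁, jj, m₂, by simp [heq], hlt2⟩

/-- every word contains a reduced sublist with the same product. -/
lemma reduce {n : ℕ} : ∀ (k : ℕ) (m : List ℕ), m.length ≤ k → IsSnWord n m →
    ∃ m', m'.Sublist m ∧ wordProd m' = wordProd m ∧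
      m'.length = (Inv n (wordProd m)).card := by
  intro k
  induction k with
  | zero =>
      intro m hm _
      have : m = [] := List.length_eq_zero_iff.mp (by omega)
      subst this
      exact ⟨[], List.Sublist.refl _, rfl, by simp⟩
  | succ k ih =>
      intro m hm hsn
      rcases eq_or_lt_of_le (card_Inv_le_length hsn) with heq | hlt
      · exact ⟨m, List.Sublist.refl _, rfl, heq.symm⟩
      · obtain ⟨m₁, j, m₂, rfl, hdn⟩ := scan m hsn hlt
        obtain ⟨u, r, u', rfl, hprod⟩ := exchange m₂ j (j + 1) (by omega) hdn
        have hprodeq : wordProd (m₁ ++ (u ++ u')) = wordProd (m₁ ++ j :: (u ++ r :: u')) := by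
          have h2 := hprod
          simp only [wordProd_append, wordProd_cons] at h2 ⊢
          rw [← h2]
        have hsub : (m₁ ++ (u ++ u')).Sublist (m₁ ++ j :: (u ++ r :: u')) := by
          refine List.Sublist.append (List.Sublist.refl _) ?_
          refine List.Sublist.cons j ?_
          exact List.Sublist.append (List.Sublist.refl _) (List.sublist_cons_self r u')
        have hlen : (m₁ ++ (u ++ u')).length ≤ k := by
          simp only [List.length_append, List.length_cons] at hm ⊢
          omega
        obtain ⟨m', hs, hp, hl⟩ := ih _ hlen (snWord_sublist hsub hsn)
        exact ⟨m', hs.trans hsub, by rw [hp, hprodeq], by rw [hl, hprodeq]⟩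

/-- a reduced word for `wordProd m` inside any word `m`. -/
lemma exists_reduced_sublist {n : ℕ} (m : List ℕ) (hsn : IsSnWord n m) :
    ∃ m', m'.Sublist m ∧ IsReducedWord n (wordProd m) m' := by
  obtain ⟨m', hs, hp, hl⟩ := reduce m.length m le_rfl hsn
  refine ⟨m', hs, snWord_sublist hs hsn, hp, ?_⟩
  intro l' hl' hpl'
  rw [hl, ← hpl']
  exact card_Inv_le_length hl'

lemma length_of_reduced {n : ℕ} {w : Equiv.Perm ℕ} {l : List ℕ}
    (h : IsReducedWord n w l) : l.length = (Inv n w).card := by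
  obtain ⟨hsn, hp, hmin⟩ := h
  obtain ⟨m'', hs'', hp'', hl''⟩ := reduce l.length l le_rfl hsn
  rw [hp] at hp'' hl''
  have h1 := hmin m'' (snWord_sublist hs'' hsn) hp''
  have h2 : (Inv n w).card ≤ l.length := by rw [← hp]; exact card_Inv_le_length hsn
  omega

end PermAux

noncomputable section

namespace SkewShape

variable (sh : SkewShape)

lemma mem_cells_iff {b : ℕ × ℕ} : b ∈ sh.cells ↔ b ∈ sh.lam ∧ b ∉ sh.mu := by
  simp [cells, YoungDiagram.mem_cells]

lemma cells_nw_row {x y y' y'' : ℕ} (h1 : (x, y) ∈ sh.cells) {x' : ℕ}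
    (h2 : (x', y') ∈ sh.cells) (hx : x ≤ x') (ha : y ≤ y'') (hb : y'' ≤ y') :
    (x, y'') ∈ sh.cells := by
  rw [mem_cells_iff] at h1 h2 ⊢
  refine ⟨sh.lam.up_left_mem hx hb h2.1, fun hmu => h1.2 (sh.mu.up_left_mem le_rfl ha hmu)⟩

lemma cells_nw_col {x y x' y' x'' : ℕ} (h1 : (x, y) ∈ sh.cells)
    (h2 : (x', y') ∈ sh.cells) (hy : y ≤ y') (ha : x ≤ x'') (hb : x'' ≤ x') :
    (x'', y') ∈ sh.cells := by
  rw [mem_cells_iff] at h1 h2 ⊢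
  refine ⟨sh.lam.up_left_mem hb le_rfl h2.1, fun hmu => h1.2 (sh.mu.up_left_mem ha hy hmu)⟩

lemma row_chain {f : (ℕ × ℕ) → ℕ} (hf : sh.IsRowColStrict f) :
    ∀ (d x y : ℕ), (x, y) ∈ sh.cells → (x, y + d + 1) ∈ sh.cells →
      f (x, y) < f (x, y + d + 1) := by
  intro d
  induction d with
  | zero => intro x y h1 h2; exact hf.1 x y h1 h2
  | succ d ih =>
      intro x y h1 h2
      have hmid : (x, y + d + 1) ∈ sh.cells :=
        sh.cells_nw_row h1 h2 le_rfl (by omega) (by omega)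
      rw [show y + (d + 1) + 1 = y + d + 1 + 1 from by omega] at h2 ⊢
      exact lt_trans (ih x y h1 hmid) (hf.1 x (y + d + 1) hmid h2)

lemma col_chain {f : (ℕ × ℕ) → ℕ} (hf : sh.IsRowColStrict f) :
    ∀ (d x y : ℕ), (x, y) ∈ sh.cells → (x + d + 1, y) ∈ sh.cells →
      f (x, y) < f (x + d + 1, y) := by
  intro d
  induction d with
  | zero => intro x y h1 h2; exact hf.2 x y h1 h2
  | succ d ih =>
      intro x y h1 h2
      have hmid : (x + d + 1, y) ∈ sh.cells :=
        sh.cells_nw_col h1 h2 le_rfl (by omega) (by omega)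
      rw [show x + (d + 1) + 1 = x + d + 1 + 1 from by omega] at h2 ⊢
      exact lt_trans (ih x y h1 hmid) (hf.2 (x + d + 1) y hmid h2)

/-- entries strictly increase to the southeast (weakly in each coordinate, not both equal) -/
lemma nw_lt {f : (ℕ × ℕ) → ℕ} (hf : sh.IsRowColStrict f) {x y x' y' : ℕ}
    (h1 : (x, y) ∈ sh.cells) (h2 : (x', y') ∈ sh.cells) (hx : x ≤ x') (hy : y ≤ y')
    (hne : (x, y) ≠ (x', y')) : f (x, y) < f (x', y') := by
  rcases eq_or_lt_of_le hy with rfl | hy'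
  · rcases eq_or_lt_of_le hx with rfl | hx'
    · exact absurd rfl hne
    · obtain ⟨d, rfl⟩ : ∃ d, x' = x + d + 1 := ⟨x' - x - 1, by omega⟩
      exact sh.col_chain hf d x y h1 h2
  · have hmidcell : (x, y') ∈ sh.cells := sh.cells_nw_row h1 h2 hx (le_of_lt hy') le_rfl
    obtain ⟨d, rfl⟩ : ∃ d, y' = y + d + 1 := ⟨y' - y - 1, by omega⟩
    have step1 : f (x, y) < f (x, y + d + 1) := sh.row_chain hf d x y h1 hmidcell
    rcases eq_or_lt_of_le hx with rfl | hx'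
    · exact step1
    · obtain ⟨e, rfl⟩ : ∃ e, x' = x + e + 1 := ⟨x' - x - 1, by omega⟩
      exact lt_trans step1 (sh.col_chain hf e x (y + d + 1) hmidcell h2)

end SkewShape

namespace ColAux

lemma colLt_trans {a b c : ℕ × ℕ} (h1 : colLt a b) (h2 : colLt b c) : colLt a c := by
  unfold colLt at *; omega

lemma colLt_irrefl (a : ℕ × ℕ) : ¬ colLt a a := by unfold colLt; omega

lemma colLt_trichotomy (a b : ℕ × ℕ) : colLt a b ∨ a = b ∨ colLt b a := by
  unfold colLt
  rcases a with ⟨a1, a2⟩; rcases b with ⟨b1, b2⟩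
  simp only [Prod.mk.injEq]
  omega

end ColAux

namespace SkewShape

variable (sh : SkewShape)

lemma colReading_mem {b : ℕ × ℕ} (hb : b ∈ sh.cells) :
    sh.colReading b = 1 + (sh.cells.filter fun b' => colLt b' b).card := by
  rw [colReading, if_pos hb]

lemma colReading_zero {b : ℕ × ℕ} (hb : b ∉ sh.cells) : sh.colReading b = 0 := by
  rw [colReading, if_neg hb]

lemma colReading_lt {b b' : ℕ × ℕ} (hb : b ∈ sh.cells) (hb' : b' ∈ sh.cells)
    (h : colLt b b') : sh.colReading b < sh.colReading b' := by
  rw [sh.colReading_mem hb, sh.colReading_mem hb']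
  have hss : (sh.cells.filter fun z => colLt z b) ⊂ (sh.cells.filter fun z => colLt z b') := by
    refine Finset.ssubset_iff_of_subset ?_ |>.mpr ?_
    · intro z hz
      rw [Finset.mem_filter] at hz ⊢
      exact ⟨hz.1, ColAux.colLt_trans hz.2 h⟩
    · exact ⟨b, by simp [Finset.mem_filter, hb, h], by simp [Finset.mem_filter, ColAux.colLt_irrefl]⟩
  have := Finset.card_lt_card hss
  omega

lemma colReading_injOn : Set.InjOn sh.colReading ↑sh.cells := by
  intro a ha b hb hab
  rcases ColAux.colLt_trichotomy a b with h | h | h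
  · exact absurd hab (ne_of_lt (sh.colReading_lt ha hb h))
  · exact h
  · exact absurd hab.symm (ne_of_lt (sh.colReading_lt hb ha h))

lemma colReading_mem_Icc {b : ℕ × ℕ} (hb : b ∈ sh.cells) :
    sh.colReading b ∈ Finset.Icc 1 sh.nb := by
  rw [sh.colReading_mem hb, Finset.mem_Icc]
  constructor
  · omega
  · have : (sh.cells.filter fun z => colLt z b) ⊆ sh.cells.erase b := by
      intro z hz
      rw [Finset.mem_filter] at hz
      rw [Finset.mem_erase]
      exact ⟨fun h => ColAux.colLt_irrefl b (h ▸ hz.2), hz.1⟩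
    have h2 := Finset.card_le_card this
    have h3 := Finset.card_erase_of_mem hb
    have h4 : 1 ≤ sh.cells.card := Finset.card_pos.mpr ⟨b, hb⟩
    unfold nb
    omega

lemma colReading_image : sh.cells.image sh.colReading = Finset.Icc 1 sh.nb := by
  apply Finset.eq_of_subset_of_card_le
  · intro m hm
    rw [Finset.mem_image] at hm
    obtain ⟨b, hb, rfl⟩ := hm
    exact sh.colReading_mem_Icc hb
  · rw [Finset.card_image_of_injOn sh.colReading_injOn, Nat.card_Icc]
    unfold nb
    omega

lemma colReading_bijOn :
    Set.BijOn sh.colReading ↑sh.cells ↑(Finset.Icc 1 sh.nb) := by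
  refine ⟨fun b hb => sh.colReading_mem_Icc hb, sh.colReading_injOn, ?_⟩
  intro m hm
  have : m ∈ sh.cells.image sh.colReading := by rw [sh.colReading_image]; exact_mod_cast hm
  rw [Finset.mem_image] at this
  obtain ⟨b, hb, rfl⟩ := this
  exact ⟨b, hb, rfl⟩

lemma colReading_SYT : sh.colReading ∈ sh.SYT := by
  refine ⟨⟨sh.colReading_bijOn, fun b hb => sh.colReading_zero hb⟩, ?_, ?_⟩
  · intro x y h1 h2
    exact sh.colReading_lt h1 h2 (Or.inl (by omega))
  · intro x y h1 h2
    exact sh.colReading_lt h1 h2 (Or.inr ⟨rfl, by omega⟩)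

/-! ### boxOf -/

lemma boxOf_apply_eq {f : (ℕ × ℕ) → ℕ} (hf : Set.InjOn f ↑sh.cells) {b : ℕ × ℕ}
    (hb : b ∈ sh.cells) : sh.boxOf f (f b) = b := by
  have hex : ∃ a ∈ (↑sh.cells : Set (ℕ × ℕ)), f a = f b := ⟨b, hb, rfl⟩
  have h1 : sh.boxOf f (f b) ∈ (↑sh.cells : Set (ℕ × ℕ)) := Function.invFunOn_mem hex
  have h2 : f (sh.boxOf f (f b)) = f b := Function.invFunOn_eq hex
  exact hf h1 hb h2

lemma boxOf_spec {f : (ℕ × ℕ) → ℕ} (hf : sh.IsFilling f) {m : ℕ}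
    (hm : m ∈ Finset.Icc 1 sh.nb) :
    sh.boxOf f m ∈ sh.cells ∧ f (sh.boxOf f m) = m := by
  obtain ⟨b, hb, rfl⟩ := hf.1.2.2 (by exact_mod_cast hm)
  rw [sh.boxOf_apply_eq hf.1.2.1 hb]
  exact ⟨hb, rfl⟩

lemma boxOf_eq {f : (ℕ × ℕ) → ℕ} (hf : Set.InjOn f ↑sh.cells) {b : ℕ × ℕ} {m : ℕ}
    (hb : b ∈ sh.cells) (hm : f b = m) : sh.boxOf f m = b := by
  rw [← hm]; exact sh.boxOf_apply_eq hf hb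

/-! ### sApply -/

lemma sApply_sApply (i : ℕ) (f : (ℕ × ℕ) → ℕ) : sApply i (sApply i f) = f := by
  funext b; simp [sApply]

lemma swap_bijOn_Icc {n i : ℕ} (h1 : 1 ≤ i) (h2 : i + 1 ≤ n) :
    Set.BijOn (Equiv.swap i (i + 1)) ↑(Finset.Icc 1 n) ↑(Finset.Icc 1 n) := by
  have hmaps : ∀ m ∈ (↑(Finset.Icc 1 n) : Set ℕ), Equiv.swap i (i + 1) m ∈
      (↑(Finset.Icc 1 n) : Set ℕ) := by
    intro m hm
    simp only [Finset.coe_Icc, Set.mem_Icc] at hm ⊢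
    rw [Equiv.swap_apply_def]
    split_ifs <;> omega
  refine ⟨hmaps, (Equiv.injective _).injOn, ?_⟩
  intro m hm
  exact ⟨Equiv.swap i (i + 1) m, hmaps m hm, Equiv.swap_apply_self _ _ _⟩

lemma sApply_isFilling {f : (ℕ × ℕ) → ℕ} {i : ℕ} (h1 : 1 ≤ i) (h2 : i + 1 ≤ sh.nb)
    (hf : sh.IsFilling f) : sh.IsFilling (sApply i f) := by
  constructor
  · exact (swap_bijOn_Icc h1 h2).comp hf.1
  · intro b hb
    show Equiv.swap i (i + 1) (f b) = 0
    rw [hf.2 b hb]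
    exact Equiv.swap_apply_of_ne_of_ne (by omega) (by omega)

lemma boxOf_sApply {f : (ℕ × ℕ) → ℕ} {i : ℕ} (h1 : 1 ≤ i) (h2 : i + 1 ≤ sh.nb)
    (hf : sh.IsFilling f) {m : ℕ} (hm : m ∈ Finset.Icc 1 sh.nb) :
    sh.boxOf (sApply i f) m = sh.boxOf f (Equiv.swap i (i + 1) m) := by
  have hf' := sh.sApply_isFilling h1 h2 hf
  have hm' : Equiv.swap i (i + 1) m ∈ Finset.Icc 1 sh.nb := by
    have := (swap_bijOn_Icc (n := sh.nb) h1 h2).1 (by exact_mod_cast hm)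
    exact_mod_cast this
  obtain ⟨hcell, hval⟩ := sh.boxOf_spec hf hm'
  refine sh.boxOf_eq hf'.1.2.1 hcell ?_
  show Equiv.swap i (i + 1) (f _) = m
  rw [hval, Equiv.swap_apply_self]

/-! ### the word of a tableau -/

lemma exists_isWordOf {f : (ℕ × ℕ) → ℕ} (hf : f ∈ sh.SYT) : ∃ w, sh.IsWordOf f w := by
  classical
  set W : ℕ → ℕ := fun m => if m ∈ Finset.Icc 1 sh.nb then f (sh.boxOf sh.colReading m) else m
    with hW
  set V : ℕ → ℕ := fun m => if m ∈ Finset.Icc 1 sh.nb then sh.colReading (sh.boxOf f m) else m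
    with hV
  have hCf : sh.colReading ∈ sh.SYT := sh.colReading_SYT
  have hWmem : ∀ m ∈ Finset.Icc 1 sh.nb, W m ∈ Finset.Icc 1 sh.nb ∧
      W m = f (sh.boxOf sh.colReading m) := by
    intro m hm
    obtain ⟨hc, _⟩ := sh.boxOf_spec hCf.1 hm
    have : f (sh.boxOf sh.colReading m) ∈ Finset.Icc 1 sh.nb := by
      have := hf.1.1.1 (show (sh.boxOf sh.colReading m) ∈ (↑sh.cells : Set (ℕ×ℕ)) from hc)
      exact_mod_cast this
    exact ⟨by rw [hW]; simp only [if_pos hm]; exact this, by rw [hW]; simp only [if_pos hm]⟩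
  have hVmem : ∀ m ∈ Finset.Icc 1 sh.nb, V m ∈ Finset.Icc 1 sh.nb ∧
      V m = sh.colReading (sh.boxOf f m) := by
    intro m hm
    obtain ⟨hc, _⟩ := sh.boxOf_spec hf.1 hm
    have : sh.colReading (sh.boxOf f m) ∈ Finset.Icc 1 sh.nb := sh.colReading_mem_Icc hc
    exact ⟨by rw [hV]; simp only [if_pos hm]; exact this, by rw [hV]; simp only [if_pos hm]⟩
  have hleft : ∀ m, V (W m) = m := by
    intro m
    by_cases hm : m ∈ Finset.Icc 1 sh.nb
    · obtain ⟨hWin, hWeq⟩ := hWmem m hm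
      obtain ⟨hVin, hVeq⟩ := hVmem _ hWin
      rw [hVeq, hWeq]
      obtain ⟨hc, hcv⟩ := sh.boxOf_spec hCf.1 hm
      rw [sh.boxOf_apply_eq hf.1.1.2.1 hc, hcv]
    · have h1 : W m = m := by rw [hW]; simp only [if_neg hm]
      rw [h1, hV]; simp only [if_neg hm]
  have hright : ∀ m, W (V m) = m := by
    intro m
    by_cases hm : m ∈ Finset.Icc 1 sh.nb
    · obtain ⟨hVin, hVeq⟩ := hVmem m hm
      obtain ⟨hWin, hWeq⟩ := hWmem _ hVin
      rw [hWeq, hVeq]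
      obtain ⟨hc, hcv⟩ := sh.boxOf_spec hf.1 hm
      rw [sh.boxOf_apply_eq sh.colReading_injOn hc, hcv]
    · have h1 : V m = m := by rw [hV]; simp only [if_neg hm]
      rw [h1, hW]; simp only [if_neg hm]
  refine ⟨⟨W, V, hleft, hright⟩, ?_, ?_⟩
  · intro b hb
    have hcb : sh.colReading b ∈ Finset.Icc 1 sh.nb := sh.colReading_mem_Icc hb
    show W (sh.colReading b) = f b
    obtain ⟨_, hWeq⟩ := hWmem _ hcb
    rw [hWeq, sh.boxOf_apply_eq sh.colReading_injOn hb]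
  · intro m hm
    show W m = m
    rw [hW]; simp only [if_neg hm]

lemma isWordOf_unique {f : (ℕ × ℕ) → ℕ} {w w' : Equiv.Perm ℕ}
    (h : sh.IsWordOf f w) (h' : sh.IsWordOf f w') : w = w' := by
  apply Equiv.ext
  intro m
  by_cases hm : m ∈ Finset.Icc 1 sh.nb
  · obtain ⟨b, hb, rfl⟩ := sh.colReading_bijOn.2.2 (by exact_mod_cast hm)
    rw [h.1 b hb, h'.1 b hb]
  · rw [h.2 m hm, h'.2 m hm]

/-- the chosen word of a tableau -/
def wOf (f : (ℕ × ℕ) → ℕ) : Equiv.Perm ℕ :=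
  if h : ∃ w, sh.IsWordOf f w then h.choose else 1

lemma wOf_spec {f : (ℕ × ℕ) → ℕ} (hf : f ∈ sh.SYT) : sh.IsWordOf f (sh.wOf f) := by
  rw [wOf, dif_pos (sh.exists_isWordOf hf)]
  exact (sh.exists_isWordOf hf).choose_spec

lemma wOf_eq {f : (ℕ × ℕ) → ℕ} (hf : f ∈ sh.SYT) {w : Equiv.Perm ℕ}
    (h : sh.IsWordOf f w) : sh.wOf f = w :=
  sh.isWordOf_unique (sh.wOf_spec hf) h

lemma isWordOf_inj {f g : (ℕ × ℕ) → ℕ} {w : Equiv.Perm ℕ} (hf : f ∈ sh.SYT) (hg : g ∈ sh.SYT)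
    (h : sh.IsWordOf f w) (h' : sh.IsWordOf g w) : f = g := by
  funext b
  by_cases hb : b ∈ sh.cells
  · rw [← h.1 b hb, ← h'.1 b hb]
  · rw [hf.1.2 b hb, hg.1.2 b hb]

lemma isWordOf_colReading : sh.IsWordOf sh.colReading 1 :=
  ⟨fun b _ => rfl, fun m _ => rfl⟩

lemma isWordOf_sApply {f : (ℕ × ℕ) → ℕ} {w : Equiv.Perm ℕ} {i : ℕ} (h1 : 1 ≤ i)
    (h2 : i + 1 ≤ sh.nb) (h : sh.IsWordOf f w) :
    sh.IsWordOf (sApply i f) (Equiv.swap i (i + 1) * w) := by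
  constructor
  · intro b hb
    show Equiv.swap i (i + 1) (w (sh.colReading b)) = Equiv.swap i (i + 1) (f b)
    rw [h.1 b hb]
  · intro m hm
    show Equiv.swap i (i + 1) (w m) = m
    rw [h.2 m hm]
    refine Equiv.swap_apply_of_ne_of_ne ?_ ?_ <;>
      (simp only [Finset.mem_Icc, not_and_or, not_le] at hm; omega)

/-- `C`-labels translate `boxOf` into the inverse permutation. -/
lemma colReading_boxOf {f : (ℕ × ℕ) → ℕ} {w : Equiv.Perm ℕ} (hf : f ∈ sh.SYT)
    (h : sh.IsWordOf f w) {m : ℕ} (hm : m ∈ Finset.Icc 1 sh.nb) :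
    sh.colReading (sh.boxOf f m) = w⁻¹ m := by
  obtain ⟨hc, hv⟩ := sh.boxOf_spec hf.1 hm
  have := h.1 _ hc
  rw [hv] at this
  conv_rhs => rw [← this]
  rw [Equiv.Perm.inv_def, Equiv.symm_apply_apply]

end SkewShape

end


noncomputable section

namespace SkewShape

variable (sh : SkewShape)

lemma not_adjacent_row {f : (ℕ × ℕ) → ℕ} {i x y : ℕ} (hsf : sApply i f ∈ sh.SYT)
    (hb : (x, y) ∈ sh.cells) (hb' : (x, y + 1) ∈ sh.cells)
    (hv : f (x, y) = i) (hv' : f (x, y + 1) = i + 1) : False := by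
  have := hsf.2.1 x y hb hb'
  simp only [sApply, hv, hv', Equiv.swap_apply_left, Equiv.swap_apply_right] at this
  omega

lemma not_adjacent_col {f : (ℕ × ℕ) → ℕ} {i x y : ℕ} (hsf : sApply i f ∈ sh.SYT)
    (hb : (x, y) ∈ sh.cells) (hb' : (x + 1, y) ∈ sh.cells)
    (hv : f (x, y) = i) (hv' : f (x + 1, y) = i + 1) : False := by
  have := hsf.2.2 x y hb hb'
  simp only [sApply, hv, hv', Equiv.swap_apply_left, Equiv.swap_apply_right] at this
  omega

/-- If `f` and `s_i f` are standard and the box of `i` precedes the box of `i+1` in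
column order, then the box of `i` is strictly southwest of the box of `i+1`. -/
lemma sw_of_colLt {f : (ℕ × ℕ) → ℕ} {i : ℕ} (hf : f ∈ sh.SYT) (hsf : sApply i f ∈ sh.SYT)
    (h1 : 1 ≤ i) (h2 : i + 1 ≤ sh.nb)
    (hcol : colLt (sh.boxOf f i) (sh.boxOf f (i + 1))) :
    (sh.boxOf f (i + 1)).1 < (sh.boxOf f i).1 ∧ (sh.boxOf f i).2 < (sh.boxOf f (i + 1)).2 := by
  have hiI : i ∈ Finset.Icc 1 sh.nb := by simp; omega
  have hi1I : i + 1 ∈ Finset.Icc 1 sh.nb := by simp; omega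
  obtain ⟨hbc, hbv⟩ := sh.boxOf_spec hf.1 hiI
  obtain ⟨hbc', hbv'⟩ := sh.boxOf_spec hf.1 hi1I
  rcases hbeq : sh.boxOf f i with ⟨x, y⟩
  rcases hbeq' : sh.boxOf f (i + 1) with ⟨x', y'⟩
  rw [hbeq] at hbc hbv hcol
  rw [hbeq'] at hbc' hbv' hcol
  show x' < x ∧ y < y'
  simp only [colLt] at hcol
  rcases hcol with hyy | ⟨hyy, hxx⟩
  · -- y < y'
    refine ⟨?_, hyy⟩
    by_contra hx
    push_neg at hx
    have hmid : (x, y') ∈ sh.cells := sh.cells_nw_row hbc hbc' hx (le_of_lt hyy) le_rfl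
    have h3 : f (x, y) < f (x, y') :=
      sh.nw_lt hf.2 hbc hmid le_rfl (le_of_lt hyy)
        (by simp only [ne_eq, Prod.mk.injEq, not_and]; omega)
    rcases eq_or_lt_of_le hx with heq | hxlt
    · subst heq
      rcases eq_or_lt_of_le (Nat.succ_le_of_lt hyy) with hadj | hfar
      · rw [← hadj] at hbc' hbv'
        exact (sh.not_adjacent_row hsf hbc hbc' hbv hbv').elim
      · have hmid2 : (x, y + 1) ∈ sh.cells :=
          sh.cells_nw_row hbc hbc' le_rfl (by omega) (by omega)
        have h4 : f (x, y) < f (x, y + 1) :=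
          sh.nw_lt hf.2 hbc hmid2 le_rfl (by omega)
            (by simp only [ne_eq, Prod.mk.injEq, not_and]; omega)
        have h5 : f (x, y + 1) < f (x, y') :=
          sh.nw_lt hf.2 hmid2 hbc' le_rfl (by omega)
            (by simp only [ne_eq, Prod.mk.injEq, not_and]; omega)
        omega
    · have h5 : f (x, y') < f (x', y') :=
        sh.nw_lt hf.2 hmid hbc' (le_of_lt hxlt) le_rfl
          (by simp only [ne_eq, Prod.mk.injEq, not_and]; omega)
      omega
  · -- same column
    exfalso
    subst hyy
    rcases eq_or_lt_of_le (Nat.succ_le_of_lt hxx) with hadj | hfar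
    · rw [← hadj] at hbc' hbv'
      exact sh.not_adjacent_col hsf hbc hbc' hbv hbv' 
    · have hmid : (x + 1, y) ∈ sh.cells := sh.cells_nw_col hbc hbc' le_rfl (by omega) (by omega)
      have h4 : f (x, y) < f (x + 1, y) :=
        sh.nw_lt hf.2 hbc hmid (by omega) le_rfl
          (by simp only [ne_eq, Prod.mk.injEq, not_and]; omega)
      have h5 : f (x + 1, y) < f (x', y) :=
        sh.nw_lt hf.2 hmid hbc' (by omega) le_rfl
          (by simp only [ne_eq, Prod.mk.injEq, not_and]; omega)
      omega

lemma invSet_mem {f : (ℕ × ℕ) → ℕ} {p : ℕ × ℕ} :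
    p ∈ sh.invSet f ↔ p.1 ∈ Finset.Icc 1 sh.nb ∧ p.2 ∈ Finset.Icc 1 sh.nb ∧ p.2 < p.1 ∧
      (sh.boxOf f p.2).1 < (sh.boxOf f p.1).1 ∧ (sh.boxOf f p.1).2 < (sh.boxOf f p.2).2 := by
  simp [invSet, Finset.mem_filter, Finset.mem_product, and_assoc]

lemma invSet_sApply {f : (ℕ × ℕ) → ℕ} {i : ℕ} (hf : f ∈ sh.SYT)
    (h1 : 1 ≤ i) (h2 : i + 1 ≤ sh.nb)
    (hSW : (sh.boxOf f (i + 1)).1 < (sh.boxOf f i).1 ∧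
      (sh.boxOf f i).2 < (sh.boxOf f (i + 1)).2) :
    sh.invSet (sApply i f) = insert (i + 1, i)
      ((sh.invSet f).image fun p => (Equiv.swap i (i + 1) p.1, Equiv.swap i (i + 1) p.2)) := by
  have hiI : i ∈ Finset.Icc 1 sh.nb := by simp; omega
  have hi1I : i + 1 ∈ Finset.Icc 1 sh.nb := by simp; omega
  have hswapIcc : ∀ m ∈ Finset.Icc 1 sh.nb, Equiv.swap i (i + 1) m ∈ Finset.Icc 1 sh.nb := by
    intro m hm
    have := (swap_bijOn_Icc (n := sh.nb) h1 h2).1 (by exact_mod_cast hm)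
    exact_mod_cast this
  have hbox : ∀ m ∈ Finset.Icc 1 sh.nb,
      sh.boxOf (sApply i f) m = sh.boxOf f (Equiv.swap i (i + 1) m) := fun m hm =>
    sh.boxOf_sApply h1 h2 hf.1 hm
  ext ⟨a, b⟩
  rw [invSet_mem, Finset.mem_insert]
  dsimp only
  constructor
  · rintro ⟨haI, hbI, hba, hg1, hg2⟩
    by_cases hab : (a, b) = (i + 1, i)
    · exact Or.inl hab
    · right
      rw [Finset.mem_image]
      refine ⟨(Equiv.swap i (i + 1) a, Equiv.swap i (i + 1) b), ?_, ?_⟩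
      · rw [invSet_mem]
        refine ⟨hswapIcc a haI, hswapIcc b hbI, ?_, ?_, ?_⟩
        · rcases PermAux.flip_lemma (j := i) hba with ⟨hb', ha'⟩ | hlt
          · exact absurd (by rw [ha', hb'] : (a, b) = (i + 1, i)) hab
          · exact hlt
        · rw [← hbox b hbI, ← hbox a haI]; exact hg1
        · rw [← hbox a haI, ← hbox b hbI]; exact hg2
      · simp [Equiv.swap_apply_self]
  · rintro (heq | hmem)
    · rw [Prod.mk.injEq] at heq
      rw [heq.1, heq.2]
      refine ⟨hi1I, hiI, by omega, ?_, ?_⟩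
      · rw [hbox i hiI, hbox (i + 1) hi1I, Equiv.swap_apply_left, Equiv.swap_apply_right]
        exact hSW.1
      · rw [hbox i hiI, hbox (i + 1) hi1I, Equiv.swap_apply_left, Equiv.swap_apply_right]
        exact hSW.2
    · rw [Finset.mem_image] at hmem
      obtain ⟨⟨c, d⟩, hcd, heq⟩ := hmem
      rw [Prod.mk.injEq] at heq
      obtain ⟨hc, hd⟩ := heq
      rw [invSet_mem] at hcd
      obtain ⟨hcI, hdI, hdc, hgeo1, hgeo2⟩ := hcd
      dsimp only at hcI hdI hdc hgeo1 hgeo2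
      rw [← hc, ← hd]
      refine ⟨hswapIcc c hcI, hswapIcc d hdI, ?_, ?_, ?_⟩
      · rcases PermAux.flip_lemma (j := i) hdc with ⟨hd', hc'⟩ | hlt
        · exfalso
          rw [hc', hd'] at hgeo1
          have hsw1 := hSW.1
          omega
        · exact hlt
      · rw [hbox _ (hswapIcc d hdI), hbox _ (hswapIcc c hcI),
          Equiv.swap_apply_self, Equiv.swap_apply_self]
        exact hgeo1
      · rw [hbox _ (hswapIcc c hcI), hbox _ (hswapIcc d hdI),
          Equiv.swap_apply_self, Equiv.swap_apply_self]
        exact hgeo2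

lemma prod_invSet_sApply {f : (ℕ × ℕ) → ℕ} {i : ℕ} (hf : f ∈ sh.SYT)
    (h1 : 1 ≤ i) (h2 : i + 1 ≤ sh.nb)
    (hSW : (sh.boxOf f (i + 1)).1 < (sh.boxOf f i).1 ∧
      (sh.boxOf f i).2 < (sh.boxOf f (i + 1)).2) :
    ∏ p ∈ sh.invSet (sApply i f), (1 + sh.aIJ (sApply i f) p.1 p.2) =
      (1 + sh.aI f i) * ∏ p ∈ sh.invSet f, (1 + sh.aIJ f p.1 p.2) := by
  have hiI : i ∈ Finset.Icc 1 sh.nb := by simp; omega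
  have hi1I : i + 1 ∈ Finset.Icc 1 sh.nb := by simp; omega
  have hswapIcc : ∀ m ∈ Finset.Icc 1 sh.nb, Equiv.swap i (i + 1) m ∈ Finset.Icc 1 sh.nb := by
    intro m hm
    have := (swap_bijOn_Icc (n := sh.nb) h1 h2).1 (by exact_mod_cast hm)
    exact_mod_cast this
  have hbox : ∀ m ∈ Finset.Icc 1 sh.nb,
      sh.boxOf (sApply i f) m = sh.boxOf f (Equiv.swap i (i + 1) m) := fun m hm =>
    sh.boxOf_sApply h1 h2 hf.1 hm
  have hnotmem : (i + 1, i) ∉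
      (sh.invSet f).image fun p => (Equiv.swap i (i + 1) p.1, Equiv.swap i (i + 1) p.2) := by
    rw [Finset.mem_image]
    rintro ⟨⟨c, d⟩, hcd, heq⟩
    rw [invSet_mem] at hcd
    rw [Prod.mk.injEq] at heq
    dsimp only at hcd heq
    have hc : c = i := by
      have h := congrArg (Equiv.swap i (i + 1)) heq.1
      rwa [Equiv.swap_apply_self, Equiv.swap_apply_right] at h
    have hd : d = i + 1 := by
      have h := congrArg (Equiv.swap i (i + 1)) heq.2
      rwa [Equiv.swap_apply_self, Equiv.swap_apply_left] at h
    have := hcd.2.2.1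
    omega
  rw [sh.invSet_sApply hf h1 h2 hSW, Finset.prod_insert hnotmem, Finset.prod_image]
  · congr 1
    · -- head factor
      have e1 : sh.boxOf (sApply i f) i = sh.boxOf f (i + 1) := by
        rw [hbox i hiI, Equiv.swap_apply_left]
      have e2 : sh.boxOf (sApply i f) (i + 1) = sh.boxOf f i := by
        rw [hbox (i + 1) hi1I, Equiv.swap_apply_right]
      simp only [aI, aIJ]
      rw [e1, e2]
    · apply Finset.prod_congr rfl
      intro p hp
      rw [invSet_mem] at hp
      have e1 : sh.boxOf (sApply i f) (Equiv.swap i (i + 1) p.1) = sh.boxOf f p.1 := by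
        rw [hbox _ (hswapIcc p.1 hp.1), Equiv.swap_apply_self]
      have e2 : sh.boxOf (sApply i f) (Equiv.swap i (i + 1) p.2) = sh.boxOf f p.2 := by
        rw [hbox _ (hswapIcc p.2 hp.2.1), Equiv.swap_apply_self]
      simp only [aIJ]
      rw [e1, e2]
  · intro p _ q _ hpq
    rw [Prod.mk.injEq] at hpq
    have h1' := (Equiv.swap i (i + 1)).injective hpq.1
    have h2' := (Equiv.swap i (i + 1)).injective hpq.2
    exact Prod.ext h1' h2'

end SkewShape

end


noncomputable section

namespace SkewShape

variable (sh : SkewShape)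

lemma vOf_apply (f : (ℕ × ℕ) → ℕ) (g : sh.SYTt) :
    (sh.vOf f) g = if f = g.1 then 1 else 0 := by
  rw [vOf]
  split_ifs with h hfg hfg
  · erw [Finsupp.single_apply, if_pos (Subtype.ext hfg)]
  · erw [Finsupp.single_apply, if_neg (fun hh => hfg (congrArg Subtype.val hh))]
  · exact absurd (hfg ▸ g.2) h
  · rfl

lemma semiOp_apply_single (i : ℕ) (T : sh.SYTt) (c : ℂ) :
    sh.semiOp i (Finsupp.single T c) =
      c • (sh.aI T.1 i • sh.vOf T.1 + (1 + sh.aI T.1 i) • sh.vOf (sApply i T.1)) := by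
  rw [semiOp, Finsupp.lsum_single]
  rfl

lemma semiOp_coeff (i : ℕ) (x : sh.SYTt →₀ ℂ) (g : sh.SYTt) :
    (sh.semiOp i x) g = sh.aI g.1 i * x g +
      (if h : sApply i g.1 ∈ sh.SYT then (1 + sh.aI (sApply i g.1) i) * x ⟨sApply i g.1, h⟩
       else 0) := by
  induction x using Finsupp.induction_linear with
  | zero => simp; exact fun _ => Or.inr rfl
  | add u v hu hv =>
      rw [map_add, Finsupp.add_apply, hu, hv, Finsupp.add_apply]
      split_ifs with h
      · erw [Finsupp.add_apply]; ring
      · ring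
  | single T c =>
      rw [semiOp_apply_single, Finsupp.smul_apply, Finsupp.add_apply, Finsupp.smul_apply,
        Finsupp.smul_apply, sh.vOf_apply T.1 g, sh.vOf_apply (sApply i T.1) g]
      simp only [smul_eq_mul]
      by_cases hTg : T = g
      · subst hTg
        rw [if_pos rfl, Finsupp.single_apply, if_pos rfl]
        by_cases hS : sApply i T.1 = T.1
        · have hmem : sApply i T.1 ∈ sh.SYT := by rw [hS]; exact T.2
          rw [if_pos hS, dif_pos hmem]
          have he : (⟨sApply i T.1, hmem⟩ : sh.SYTt) = T := Subtype.ext hS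
          erw [Finsupp.single_apply, if_pos he.symm]
          rw [show sh.aI (sApply i T.1) i = sh.aI T.1 i from by rw [hS]]
          ring
        · rw [if_neg hS]
          by_cases h' : sApply i T.1 ∈ sh.SYT
          · erw [dif_pos h', Finsupp.single_apply,
              if_neg (fun hh => hS (congrArg Subtype.val hh).symm)]
            ring
          · rw [dif_neg h']
            ring
      · rw [Finsupp.single_apply, if_neg hTg,
          if_neg (fun hh => hTg (Subtype.ext hh))]
        by_cases hS : sApply i T.1 = g.1
        · have h' : sApply i g.1 ∈ sh.SYT := by
            rw [← hS, sApply_sApply]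
            exact T.2
          have hTval : T.1 = sApply i g.1 := by
            rw [← hS, sApply_sApply]
          erw [if_pos hS, dif_pos h', Finsupp.single_apply, if_pos (Subtype.ext hTval),
            show sh.aI (sApply i g.1) i = sh.aI T.1 i from by rw [← hTval]]
          ring
        · rw [if_neg hS]
          by_cases h' : sApply i g.1 ∈ sh.SYT
          · erw [dif_pos h', Finsupp.single_apply, if_neg]
            · ring
            · intro hh
              apply hS
              have : T.1 = sApply i g.1 := congrArg Subtype.val hh
              rw [this, sApply_sApply]
          · rw [dif_neg h']
            ring

lemma opWord_cons (i : ℕ) (l : List ℕ) (x : sh.SYTt →₀ ℂ) :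
    sh.opWord (i :: l) x = sh.semiOp i (sh.opWord l x) := rfl

lemma support_sublist : ∀ (l : List ℕ), IsSnWord sh.nb l → ∀ g : sh.SYTt,
    (sh.opWord l (sh.vOf sh.colReading)) g ≠ 0 →
    ∃ m : List ℕ, m.Sublist l ∧ wordProd m = sh.wOf g.1 := by
  intro l
  induction l with
  | nil =>
      intro _ g hg
      rw [opWord, LinearMap.id_apply, sh.vOf_apply] at hg
      have hC : sh.colReading = g.1 := by
        by_contra hne
        rw [if_neg hne] at hg
        exact hg rfl
      refine ⟨[], List.Sublist.refl _, ?_⟩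
      rw [PermAux.wordProd_nil, sh.wOf_eq g.2]
      rw [← hC]
      exact sh.isWordOf_colReading
  | cons i l ih =>
      intro hsn g hg
      have hi := hsn i (by simp)
      have hsn' : IsSnWord sh.nb l := fun j hj => hsn j (by simp [hj])
      rw [opWord_cons, semiOp_coeff] at hg
      by_cases h1 : (sh.opWord l (sh.vOf sh.colReading)) g ≠ 0
      · obtain ⟨m, hm, hp⟩ := ih hsn' g h1
        exact ⟨m, hm.cons i, hp⟩
      · push_neg at h1
        rw [h1, mul_zero, zero_add] at hg
        by_cases h' : sApply i g.1 ∈ sh.SYT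
        · rw [dif_pos h'] at hg
          have h2 : (sh.opWord l (sh.vOf sh.colReading)) ⟨sApply i g.1, h'⟩ ≠ 0 :=
            fun hz => hg (by rw [hz, mul_zero])
          obtain ⟨m, hm, hp⟩ := ih hsn' _ h2
          refine ⟨i :: m, hm.cons₂ i, ?_⟩
          rw [PermAux.wordProd_cons, hp]
          have hw' : sh.IsWordOf (sApply i g.1) (sh.wOf (sApply i g.1)) := sh.wOf_spec h'
          have := sh.isWordOf_sApply hi.1 hi.2 hw'
          rw [sApply_sApply] at this
          exact (sh.wOf_eq g.2 this).symm
        · rw [dif_neg h'] at hg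
          exact absurd rfl hg

lemma coeff_zero_of_short (l : List ℕ) (hsn : IsSnWord sh.nb l) (g : sh.SYTt)
    (hlen : l.length < (PermAux.Inv sh.nb (sh.wOf g.1)).card) :
    (sh.opWord l (sh.vOf sh.colReading)) g = 0 := by
  by_contra h
  obtain ⟨m, hm, hp⟩ := sh.support_sublist l hsn g h
  have h1 : (PermAux.Inv sh.nb (wordProd m)).card ≤ m.length :=
    PermAux.card_Inv_le_length (PermAux.snWord_sublist hm hsn)
  have h2 := hm.length_le
  rw [hp] at h1
  omega

lemma applyWord_append (xs ys : List ℕ) (f : (ℕ × ℕ) → ℕ) :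
    applyWord (xs ++ ys) f = applyWord ys (applyWord xs f) := by
  induction xs generalizing f with
  | nil => rfl
  | cons a as ih => rw [List.cons_append, applyWord, applyWord, ih]

lemma invSet_colReading : sh.invSet sh.colReading = ∅ := by
  ext p
  simp only [Finset.notMem_empty, iff_false]
  rw [invSet_mem]
  rintro ⟨h1I, h2I, hlt, hgeo1, hgeo2⟩
  obtain ⟨hc1, hv1⟩ := sh.boxOf_spec sh.colReading_SYT.1 h1I
  obtain ⟨hc2, hv2⟩ := sh.boxOf_spec sh.colReading_SYT.1 h2I
  have hcol : colLt (sh.boxOf sh.colReading p.1) (sh.boxOf sh.colReading p.2) :=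
    Or.inl hgeo2
  have := sh.colReading_lt hc1 hc2 hcol
  rw [hv1, hv2] at this
  omega

lemma colLt_of_colReading_lt {b b' : ℕ × ℕ} (hb : b ∈ sh.cells) (hb' : b' ∈ sh.cells)
    (h : sh.colReading b < sh.colReading b') : colLt b b' := by
  rcases ColAux.colLt_trichotomy b b' with hc | hc | hc
  · exact hc
  · subst hc; omega
  · exact absurd (sh.colReading_lt hb' hb hc) (by omega)

/-- The main induction: value of the diagonal coefficient along a reduced word, relative
to an ambient standard tableau `T` with word `W`. -/
lemma diag_induction (T : sh.SYTt) (W : Equiv.Perm ℕ) (hW : sh.IsWordOf T.1 W) :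
    ∀ l : List ℕ, IsReducedWord sh.nb (wordProd l) l →
      PermAux.Inv sh.nb (wordProd l) ⊆ PermAux.Inv sh.nb W →
      (applyWord l.reverse sh.colReading ∈ sh.SYT) ∧
      sh.IsWordOf (applyWord l.reverse sh.colReading) (wordProd l) ∧
      ∀ g : sh.SYTt, g.1 = applyWord l.reverse sh.colReading →
        (sh.opWord l (sh.vOf sh.colReading)) g =
          ∏ p ∈ sh.invSet g.1, (1 + sh.aIJ g.1 p.1 p.2) := by
  intro l
  induction l with
  | nil =>
      intro _ _
      refine ⟨sh.colReading_SYT, sh.isWordOf_colReading, ?_⟩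
      intro g hg
      have hg' : sh.colReading = g.1 := hg.symm
      rw [opWord, LinearMap.id_apply, sh.vOf_apply, if_pos hg', ← hg', invSet_colReading,
        Finset.prod_empty]
  | cons i l ih =>
      intro hred hsub
      have hi1 : 1 ≤ i := (hred.1 i (by simp)).1
      have hi2 : i + 1 ≤ sh.nb := (hred.1 i (by simp)).2
      have hiI : i ∈ Finset.Icc 1 sh.nb := by simp; omega
      have hi1I : i + 1 ∈ Finset.Icc 1 sh.nb := by simp; omega
      have hsn' : IsSnWord sh.nb l := fun j hj => hred.1 j (by simp [hj])
      set w' := wordProd l with hw'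
      set w := wordProd (i :: l) with hw
      have hww' : w = Equiv.swap i (i + 1) * w' := PermAux.wordProd_cons i l
      have hred' : IsReducedWord sh.nb w' l := by
        refine ⟨hsn', rfl, ?_⟩
        intro l'' hsn'' hp''
        have h3 : wordProd (i :: l'') = w := by
          rw [PermAux.wordProd_cons, hp'', hww']
        have := hred.2.2 (i :: l'') (by
          intro j hj
          rcases List.mem_cons.mp hj with rfl | hj
          · exact ⟨hi1, hi2⟩
          · exact hsn'' j hj) h3
        simpa using this
      have hlen : l.length = (PermAux.Inv sh.nb w').card := PermAux.length_of_reduced hred'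
      have hlen2 : (i :: l).length = (PermAux.Inv sh.nb w).card := PermAux.length_of_reduced hred
      have hw's : PermAux.SuppIn sh.nb w' := PermAux.suppIn_wordProd hsn'
      have hne : w'⁻¹ i ≠ w'⁻¹ (i + 1) := fun hh => by
        have := w'⁻¹.injective hh; omega
      have hup : w'⁻¹ i < w'⁻¹ (i + 1) := by
        by_contra hdn
        push_neg at hdn
        have hdn' : w'⁻¹ (i + 1) < w'⁻¹ i := by omega
        have := PermAux.card_Inv_down hi1 hi2 hw's hdn'
        rw [← hww'] at this
        simp only [List.length_cons] at hlen2
        omega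
      obtain ⟨hpairnot, hInvw⟩ := PermAux.Inv_up hi1 hi2 hw's hup
      rw [← hww'] at hInvw
      have hsub' : PermAux.Inv sh.nb w' ⊆ PermAux.Inv sh.nb W := by
        refine subset_trans ?_ hsub
        rw [hInvw]
        exact Finset.subset_insert _ _
      obtain ⟨hg'syt, hg'word, hg'val⟩ := ih hred' hsub'
      set g' : (ℕ × ℕ) → ℕ := applyWord l.reverse sh.colReading with hg'def
      have happ : applyWord (i :: l).reverse sh.colReading = sApply i g' := by
        rw [List.reverse_cons, applyWord_append]
        rfl
      -- standardness of the new tableau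
      have hval : ∀ b ∈ sh.cells, sApply i g' b = w (sh.colReading b) := by
        intro b hb
        show Equiv.swap i (i + 1) (g' b) = w (sh.colReading b)
        rw [← hg'word.1 b hb, hww']
        rfl
      have hkey : ∀ b b' : ℕ × ℕ, b ∈ sh.cells → b' ∈ sh.cells →
          sh.colReading b < sh.colReading b' → T.1 b < T.1 b' →
          sApply i g' b < sApply i g' b' := by
        intro b b' hb hb' hcc hTT
        rw [hval b hb, hval b' hb']
        set c := sh.colReading b
        set c' := sh.colReading b'
        have hcI : c ∈ Finset.Icc 1 sh.nb := sh.colReading_mem_Icc hb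
        have hc'I : c' ∈ Finset.Icc 1 sh.nb := sh.colReading_mem_Icc hb'
        by_contra hcon
        push_neg at hcon
        have hne2 : w c ≠ w c' := fun hh => by
          have := w.injective hh; omega
        have hwlt : w c' < w c := by omega
        have hmem : (c, c') ∈ PermAux.Inv sh.nb w := by
          rw [PermAux.mem_Inv]
          exact ⟨hcI, hc'I, hcc, hwlt⟩
        have hmemW := hsub hmem
        rw [PermAux.mem_Inv] at hmemW
        have hT1 : T.1 b = W c := (hW.1 b hb).symm
        have hT2 : T.1 b' = W c' := (hW.1 b' hb').symm
        have h5 : W c' < W c := hmemW.2.2.2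
        omega
      have hgsyt : sApply i g' ∈ sh.SYT := by
        refine ⟨sh.sApply_isFilling hi1 hi2 hg'syt.1, ?_, ?_⟩
        · intro x y hb1 hb2
          exact hkey _ _ hb1 hb2 (sh.colReading_SYT.2.1 x y hb1 hb2) (T.2.2.1 x y hb1 hb2)
        · intro x y hb1 hb2
          exact hkey _ _ hb1 hb2 (sh.colReading_SYT.2.2 x y hb1 hb2) (T.2.2.2 x y hb1 hb2)
      have hgword : sh.IsWordOf (sApply i g') w := by
        rw [hww']
        exact sh.isWordOf_sApply hi1 hi2 hg'word
      refine ⟨by rw [happ]; exact hgsyt, by rw [happ]; exact hgword, ?_⟩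
      intro g hgeq
      rw [happ] at hgeq
      rw [opWord_cons, semiOp_coeff]
      have hwOfg : sh.wOf g.1 = w := sh.wOf_eq g.2 (by rw [hgeq]; exact hgword)
      have hzero : (sh.opWord l (sh.vOf sh.colReading)) g = 0 := by
        apply sh.coeff_zero_of_short l hsn' g
        rw [hwOfg, ← hlen2]
        simp
      rw [hzero, mul_zero, zero_add]
      have hSg : sApply i g.1 = g' := by rw [hgeq, sApply_sApply]
      simp only [hSg]
      rw [dif_pos hg'syt]
      have hXg' := hg'val ⟨g', hg'syt⟩ rfl
      rw [hXg']
      -- the southwest condition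
      have hbc1 := (sh.boxOf_spec hg'syt.1 hiI).1
      have hbc2 := (sh.boxOf_spec hg'syt.1 hi1I).1
      have e1 : sh.colReading (sh.boxOf g' i) = w'⁻¹ i :=
        sh.colReading_boxOf hg'syt hg'word hiI
      have e2 : sh.colReading (sh.boxOf g' (i + 1)) = w'⁻¹ (i + 1) :=
        sh.colReading_boxOf hg'syt hg'word hi1I
      have hcolLt : colLt (sh.boxOf g' i) (sh.boxOf g' (i + 1)) := by
        apply sh.colLt_of_colReading_lt hbc1 hbc2
        rw [e1, e2]
        exact hup
      have hSW := sh.sw_of_colLt hg'syt hgsyt hi1 hi2 hcolLt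
      have hprod := sh.prod_invSet_sApply hg'syt hi1 hi2 hSW
      rw [hgeq, hprod]

end SkewShape

end


noncomputable section

namespace SkewShape

variable (sh : SkewShape)

lemma part1_aux (T : sh.SYTt) (p : ℕ × ℕ) (hp : p ∈ sh.invSet T.1) :
    2 ≤ ctZ (sh.boxOf T.1 p.2) - ctZ (sh.boxOf T.1 p.1) ∧
    (1 + sh.aIJ T.1 p.1 p.2) =
      ((1 + (((ctZ (sh.boxOf T.1 p.2) - ctZ (sh.boxOf T.1 p.1) : ℤ) : ℝ))⁻¹ : ℝ) : ℂ) ∧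
    (1 + (((ctZ (sh.boxOf T.1 p.2) - ctZ (sh.boxOf T.1 p.1) : ℤ) : ℝ))⁻¹) ∈
      Set.Ioc (1 : ℝ) (3 / 2) := by
  rw [invSet_mem] at hp
  obtain ⟨h1I, h2I, hlt, hgeo1, hgeo2⟩ := hp
  have h2 : 2 ≤ ctZ (sh.boxOf T.1 p.2) - ctZ (sh.boxOf T.1 p.1) := by
    simp only [ctZ]
    omega
  set d : ℤ := ctZ (sh.boxOf T.1 p.2) - ctZ (sh.boxOf T.1 p.1) with hd
  have hdR : (2 : ℝ) ≤ (d : ℝ) := by exact_mod_cast h2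
  have hdpos : (0 : ℝ) < (d : ℝ) := by linarith
  refine ⟨h2, ?_, ?_⟩
  · rw [aIJ]
    have hcast : ((ctZ (sh.boxOf T.1 p.2) : ℂ)) - ((ctZ (sh.boxOf T.1 p.1) : ℂ)) =
        ((d : ℝ) : ℂ) := by
      rw [hd]
      push_cast
      ring
    rw [hcast]
    rw [one_div, ← Complex.ofReal_inv, ← Complex.ofReal_one, ← Complex.ofReal_add]
  · constructor
    · have : (0 : ℝ) < (d : ℝ)⁻¹ := inv_pos.mpr hdpos
      linarith
    · have h3 : (d : ℝ)⁻¹ ≤ 2⁻¹ := by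
        apply inv_anti₀ (by norm_num) hdR
      rw [show (3 / 2 : ℝ) = 1 + 2⁻¹ by norm_num]
      linarith

end SkewShape

end


/-- **Theorem (the natural vectors form a basis).**
For every `T ∈ SYT(λ/μ)` and every inversion `(i,j)` of `T` one has
`ct(T(j)) - ct(T(i)) ≥ 2`, so each factor `1 + a_{i,j}(T)` is a real number in `(1, 3/2]`;
consequently `A_{T,T} = ∏_{(i,j) ∈ inv(T)} (1 + a_{i,j}(T))` is a positive real number.
Moreover `A_{S,T} = 0` unless `S ≤ T` in Bruhat order.  Consequently the family
`{n_T : T ∈ SYT(λ/μ)}` is a `ℂ`-basis of the seminormal module. -/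
theorem natural_vectors_form_basis
    (sh : SkewShape)
    (N : sh.SYTt → (sh.SYTt →₀ ℂ))
    (hN : ∀ T : sh.SYTt, ∃ (w : Equiv.Perm ℕ) (l : List ℕ),
        sh.IsWordOf T.1 w ∧ IsReducedWord sh.nb w l ∧
          N T = sh.opWord l (sh.vOf sh.colReading)) :
    (∀ T : sh.SYTt, ∀ p ∈ sh.invSet T.1,
        2 ≤ ctZ (sh.boxOf T.1 p.2) - ctZ (sh.boxOf T.1 p.1) ∧
        ∃ r : ℝ, (1 + sh.aIJ T.1 p.1 p.2) = (r : ℂ) ∧ r ∈ Set.Ioc (1 : ℝ) (3 / 2)) ∧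
    (∀ T : sh.SYTt,
        (N T) T = ∏ p ∈ sh.invSet T.1, (1 + sh.aIJ T.1 p.1 p.2) ∧
        ∃ r : ℝ, (N T) T = (r : ℂ) ∧ 0 < r) ∧
    (∀ S T : sh.SYTt, ¬ sh.tabLE S.1 T.1 → (N T) S = 0) ∧
    (LinearIndependent ℂ N ∧ Submodule.span ℂ (Set.range N) = ⊤) := by
  classical
  set μ : sh.SYTt → ℕ := fun S => (PermAux.Inv sh.nb (sh.wOf S.1)).card with hμ
  -- diagonal values
  have hdiagval : ∀ T : sh.SYTt,
      (N T) T = ∏ p ∈ sh.invSet T.1, (1 + sh.aIJ T.1 p.1 p.2) := by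
    intro T
    obtain ⟨w, l, hw, hrl, hNT⟩ := hN T
    have hprodl : wordProd l = w := hrl.2.1
    have hred : IsReducedWord sh.nb (wordProd l) l := by rw [hprodl]; exact hrl
    have hsub : PermAux.Inv sh.nb (wordProd l) ⊆ PermAux.Inv sh.nb w := by
      rw [hprodl]
    obtain ⟨hgs, hgw, hval⟩ := sh.diag_induction T w hw l hred hsub
    have hTeq : T.1 = applyWord l.reverse sh.colReading := by
      apply sh.isWordOf_inj T.2 hgs hw
      rw [hprodl] at hgw
      exact hgw
    rw [hNT]
    exact hval T hTeq
  have hdiagpos : ∀ T : sh.SYTt, ∃ r : ℝ, (N T) T = (r : ℂ) ∧ 0 < r := by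
    intro T
    refine ⟨∏ p ∈ sh.invSet T.1,
      (1 + (((ctZ (sh.boxOf T.1 p.2) - ctZ (sh.boxOf T.1 p.1) : ℤ) : ℝ))⁻¹), ?_, ?_⟩
    · rw [hdiagval T, Complex.ofReal_prod]
      exact Finset.prod_congr rfl fun p hp => (sh.part1_aux T p hp).2.1
    · apply Finset.prod_pos
      intro p hp
      have := (sh.part1_aux T p hp).2.2.1
      linarith
  have hdiagne : ∀ T : sh.SYTt, (N T) T ≠ 0 := by
    intro T
    obtain ⟨r, hr, hrpos⟩ := hdiagpos T
    rw [hr]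
    exact_mod_cast ne_of_gt hrpos
  -- support control
  have hkey : ∀ S T : sh.SYTt, (N T) S ≠ 0 →
      sh.tabLE S.1 T.1 ∧ μ S ≤ μ T ∧ (μ S = μ T → S = T) := by
    intro S T hne
    obtain ⟨w, l, hw, hrl, hNT⟩ := hN T
    rw [hNT] at hne
    obtain ⟨m, hm, hmp⟩ := sh.support_sublist l hrl.1 S hne
    have hmsn : IsSnWord sh.nb m := PermAux.snWord_sublist hm hrl.1
    obtain ⟨m', hm', hred'⟩ := PermAux.exists_reduced_sublist m hmsn
    rw [hmp] at hred'
    have hwT : sh.wOf T.1 = w := sh.wOf_eq T.2 hw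
    have hlenl : l.length = (PermAux.Inv sh.nb w).card := by
      have := PermAux.length_of_reduced hrl
      exact this
    have hlenm' : m'.length = (PermAux.Inv sh.nb (sh.wOf S.1)).card :=
      PermAux.length_of_reduced hred'
    have hchain : μ S ≤ μ T := by
      rw [hμ]
      simp only
      rw [← hlenm', hwT, ← hlenl]
      exact le_trans hm'.length_le (le_trans hm.length_le le_rfl)
    refine ⟨⟨sh.wOf S.1, w, sh.wOf_spec S.2, hw, l, hrl, m', hm'.trans hm, hred'⟩,
      hchain, ?_⟩
    intro heq
    have hlen_eq : m'.length = l.length := by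
      rw [hμ] at heq
      simp only at heq
      rw [hlenm', hlenl, ← hwT]
      exact heq
    have hml : m' = l := (hm'.trans hm).eq_of_length hlen_eq
    have hws : sh.wOf S.1 = sh.wOf T.1 := by
      rw [← hred'.2.1, hml, hrl.2.1, hwT]
    have : S.1 = T.1 :=
      sh.isWordOf_inj S.2 T.2 (sh.wOf_spec S.2) (hws ▸ sh.wOf_spec T.2)
    exact Subtype.ext this
  refine ⟨fun T p hp => ⟨(sh.part1_aux T p hp).1,
      ⟨_, (sh.part1_aux T p hp).2.1, (sh.part1_aux T p hp).2.2⟩⟩,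
    fun T => ⟨hdiagval T, hdiagpos T⟩, ?_, ?_, ?_⟩
  · -- triangularity
    intro S T hnot
    by_contra hne
    exact hnot (hkey S T hne).1
  · -- linear independence
    rw [linearIndependent_iff]
    intro c hc
    by_contra hcne
    obtain ⟨T₀, hT₀, hmax⟩ :=
      Finset.exists_max_image c.support μ (Finsupp.support_nonempty_iff.mpr hcne)
    have h0 : (Finsupp.linearCombination ℂ N c) T₀ = 0 := by rw [hc]; rfl
    rw [Finsupp.linearCombination_apply, Finsupp.sum_apply, Finsupp.sum,
      Finset.sum_eq_single T₀] at h0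
    · rw [Finsupp.smul_apply, smul_eq_mul] at h0
      rcases mul_eq_zero.mp h0 with h | h
      · exact (Finsupp.mem_support_iff.mp hT₀) h
      · exact hdiagne T₀ h
    · intro T hT hTne
      rw [Finsupp.smul_apply, smul_eq_mul]
      by_cases hz : (N T) T₀ = 0
      · rw [hz, mul_zero]
      · obtain ⟨-, hle, heq⟩ := hkey T₀ T hz
        have := hmax T hT
        have : T₀ = T := heq (le_antisymm hle this)
        exact absurd this.symm hTne
    · intro hT₀n
      rw [Finsupp.notMem_support_iff.mp hT₀n, zero_smul]
      rfl
  · -- spanning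
    have hsingle : ∀ k, ∀ S : sh.SYTt, μ S = k →
        Finsupp.single S (1 : ℂ) ∈ Submodule.span ℂ (Set.range N) := by
      intro k
      induction k using Nat.strong_induction_on with
      | _ k ih =>
        intro S hSk
        have hNmem : N S ∈ Submodule.span ℂ (Set.range N) :=
          Submodule.subset_span ⟨S, rfl⟩
        have hrepr : ∑ S' ∈ (N S).support, Finsupp.single S' ((N S) S') = N S := by
          conv_rhs => rw [← Finsupp.sum_single (N S)]
          rfl
        have hS_mem_supp : S ∈ (N S).support := Finsupp.mem_support_iff.mpr (hdiagne S)
        have herase : ∀ S' ∈ (N S).support.erase S,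
            Finsupp.single S' ((N S) S') ∈ Submodule.span ℂ (Set.range N) := by
          intro S' hS'
          obtain ⟨hS'ne, hS'supp⟩ := Finset.mem_erase.mp hS'
          have hcoeff : (N S) S' ≠ 0 := Finsupp.mem_support_iff.mp hS'supp
          obtain ⟨-, hle, heq⟩ := hkey S' S hcoeff
          have hlt : μ S' < k := by
            rcases lt_or_eq_of_le hle with h | h
            · omega
            · exact absurd (heq h) hS'ne
          have h1 := ih (μ S') hlt S' rfl
          have : Finsupp.single S' ((N S) S') = ((N S) S') • Finsupp.single S' (1 : ℂ) := by
            rw [Finsupp.smul_single, smul_eq_mul, mul_one]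
          rw [this]
          exact Submodule.smul_mem _ _ h1
        have hsum_mem : ∑ S' ∈ (N S).support.erase S, Finsupp.single S' ((N S) S') ∈
            Submodule.span ℂ (Set.range N) := Submodule.sum_mem _ herase
        have hdiag_mem : Finsupp.single S ((N S) S) ∈ Submodule.span ℂ (Set.range N) := by
          have hsplit := Finset.add_sum_erase (N S).support
            (fun S' => Finsupp.single S' ((N S) S')) hS_mem_supp
          rw [hrepr] at hsplit
          rw [eq_sub_of_add_eq hsplit]
          exact Submodule.sub_mem _ hNmem hsum_mem
        have : Finsupp.single S (1 : ℂ) = ((N S) S)⁻¹ • Finsupp.single S ((N S) S) := by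
          rw [Finsupp.smul_single, smul_eq_mul, inv_mul_cancel₀ (hdiagne S)]
        rw [this]
        exact Submodule.smul_mem _ _ hdiag_mem
    refine le_antisymm le_top ?_
    intro x _
    induction x using Finsupp.induction with
    | zero => exact Submodule.zero_mem _
    | single_add a b f _ _ ihf =>
        refine Submodule.add_mem _ ?_ (ihf trivial)
        have : Finsupp.single a b = b • Finsupp.single a (1 : ℂ) := by
          rw [Finsupp.smul_single, smul_eq_mul, mul_one]
        rw [this]
        exact Submodule.smul_mem _ _ (hsingle (μ a) a rfl)
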